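/- Let χ₁,…,χ_N be distinct nonprincipal primitive Dirichlet characters and a₁,…,a_N nonzero real numbers. Then there is a constant D, depending only on a₁,…,a_N, the moduli of the χ_j, and N, such that for every nonnegative integer k, all sufficiently large T, and every X with 2 ≤ X ≤ T^{1/(2k)}, E[ |Re P_ℒ(θ)|^k ] ≤ (D k Ψ(X²))^{k/2}. -/

import Mathlib

open Complex Filter MeasureTheory
open scoped Real

/-- The primes `p ≤ Y`. -/
noncomputable def primesUpTo (Y : ℝ) : Finset ℕ :=
  (Finset.range (⌊Y⌋₊ + 1)).filter Nat.Prime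

/-- `Ψ(Y) = Σ_{p ≤ Y} 1/p`. -/
noncomputable def PsiFn (Y : ℝ) : ℝ := ∑ p ∈ primesUpTo Y, (1 : ℝ) / p

/-- The law of the random vector `(θ_p)_{p ≤ Y}`: independent uniforms on `[0,1]`. -/
noncomputable def thetaMeasure (Y : ℝ) :
    Measure ({p // p ∈ primesUpTo Y} → ℝ) :=
  Measure.pi fun _ => volume.restrict (Set.Icc 0 1)

/-- The random Dirichlet polynomial
`P_ℒ(θ) = Σ_{p ≤ Y} (a₁χ₁(p) + ⋯ + a_Nχ_N(p)) e^{2πiθ_p}/√p` (with `Y = X²`). -/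
noncomputable def PLtheta (N : ℕ) (m : Fin N → ℕ)
    (χ : ∀ j, DirichletCharacter ℂ (m j)) (a : Fin N → ℝ) (Y : ℝ)
    (θ : {p // p ∈ primesUpTo Y} → ℝ) : ℂ :=
  ∑ p : {p // p ∈ primesUpTo Y},
    (∑ j, (a j : ℂ) * χ j ((p : ℕ) : ZMod (m j))) *
      Complex.exp (2 * π * I * (θ p : ℝ)) / (Real.sqrt (p : ℕ) : ℂ)

namespace Statement11Aux

/-- Type synonym for `ℝ` carrying the uniform probability measure on `[0,1]`. -/
def UB : Type := ℝ

noncomputable instance : MeasureSpace UB :=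
  { toMeasurableSpace := inferInstanceAs (MeasurableSpace ℝ)
    volume := (volume : Measure ℝ).restrict (Set.Icc 0 1) }

instance : IsProbabilityMeasure (volume : Measure UB) := by
  constructor
  show (volume : Measure ℝ).restrict (Set.Icc 0 1) Set.univ = 1
  simp [Real.volume_Icc]

/-- `e(t) = exp(2πit)`. -/
noncomputable def eu (t : ℝ) : ℂ := Complex.exp (2 * π * I * (t : ℝ))

lemma eu_norm (t : ℝ) : ‖eu t‖ = 1 := by
  rw [eu, Complex.norm_exp]
  have h : (2 * (π : ℂ) * I * (t : ℂ)).re = 0 := by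
    simp [Complex.ext_iff]
  rw [h, Real.exp_zero]

lemma measurable_eu : Measurable eu :=
  (Complex.continuous_exp.comp (continuous_const.mul Complex.continuous_ofReal)).measurable

lemma eu_orth (α β : ℕ) :
    (∫ t : UB, eu t ^ α * (starRingEnd ℂ) (eu t) ^ β) = if α = β then 1 else 0 := by
  have key : ∀ t : ℝ, eu t ^ α * (starRingEnd ℂ) (eu t) ^ β
      = Complex.exp ((2 * (π : ℂ) * I * ((α : ℂ) - (β : ℂ))) * (t : ℂ)) := by
    intro t
    rw [eu, ← Complex.exp_conj, ← Complex.exp_nat_mul, ← Complex.exp_nat_mul, ← Complex.exp_add]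
    congr 1
    have hc : (starRingEnd ℂ) (2 * (π : ℂ) * I * (t : ℂ)) = -(2 * (π : ℂ) * I * (t : ℂ)) := by
      simp only [map_mul, Complex.conj_I, Complex.conj_ofReal, map_ofNat]
      ring
    rw [hc]
    ring
  have h0 : (∫ t : UB, eu t ^ α * (starRingEnd ℂ) (eu t) ^ β)
      = ∫ t in Set.Icc (0 : ℝ) 1, Complex.exp ((2 * (π : ℂ) * I * ((α : ℂ) - (β : ℂ))) * (t : ℂ)) := by
    show (∫ t in Set.Icc (0 : ℝ) 1, eu t ^ α * (starRingEnd ℂ) (eu t) ^ β) = _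
    exact integral_congr_ae (Filter.Eventually.of_forall fun t => key t)
  rw [h0]
  rcases eq_or_ne α β with h | h
  · subst h
    simp only [sub_self, mul_zero, zero_mul, Complex.exp_zero, if_pos rfl]
    simp [Real.volume_Icc]
  · have hα : ((α : ℂ) - (β : ℂ)) ≠ 0 := sub_ne_zero.mpr (by exact_mod_cast h)
    have hc : (2 * (π : ℂ) * I * ((α : ℂ) - (β : ℂ))) ≠ 0 := by
      apply mul_ne_zero (mul_ne_zero (mul_ne_zero two_ne_zero _) Complex.I_ne_zero) hα
      exact_mod_cast Real.pi_ne_zero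
    rw [MeasureTheory.integral_Icc_eq_integral_Ioc,
      ← intervalIntegral.integral_of_le (zero_le_one), integral_exp_mul_complex hc]
    simp only [Complex.ofReal_one, Complex.ofReal_zero, mul_one, mul_zero, Complex.exp_zero]
    have h1 : Complex.exp (2 * (π : ℂ) * I * ((α : ℂ) - (β : ℂ))) = 1 := by
      rw [show (2 * (π : ℂ) * I * ((α : ℂ) - (β : ℂ)))
          = (((α : ℤ) - (β : ℤ) : ℤ) : ℂ) * (2 * (π : ℂ) * I) by push_cast; ring,
        Complex.exp_int_mul_two_pi_mul_I]
    rw [h1]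
    simp [h]

variable {ι : Type*} [Fintype ι] [DecidableEq ι]

/-- Number of `j` with `g j = i`. -/
def cnt {k : ℕ} (g : Fin k → ι) (i : ι) : ℕ :=
  (Finset.univ.filter fun j => g j = i).card

lemma prod_comp_eq_prod_pow {M : Type*} [CommMonoid M] {k : ℕ} (g : Fin k → ι) (F : ι → M) :
    ∏ j, F (g j) = ∏ i, F i ^ cnt g i := by
  rw [← Finset.prod_fiberwise_of_maps_to (fun j _ => Finset.mem_univ (g j)) fun j => F (g j)]
  refine Finset.prod_congr rfl fun i _ => ?_
  calc ∏ j ∈ Finset.univ.filter fun j => g j = i, F (g j)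
      = ∏ j ∈ Finset.univ.filter fun j => g j = i, F i :=
        Finset.prod_congr rfl fun j hj => by rw [(Finset.mem_filter.mp hj).2]
    _ = F i ^ cnt g i := by rw [Finset.prod_const]; rfl

lemma sum_pow_expand {R : Type*} [CommSemiring R] (f : ι → R) (k : ℕ) :
    (∑ i, f i) ^ k = ∑ r : Fin k → ι, ∏ j, f (r j) := by
  calc (∑ i, f i) ^ k = ∏ _j : Fin k, ∑ i, f i := by
        rw [Finset.prod_const, Finset.card_univ, Fintype.card_fin]
    _ = ∑ r ∈ Fintype.piFinset fun _ : Fin k => (Finset.univ : Finset ι), ∏ j, f (r j) :=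
        Finset.prod_univ_sum _ _
    _ = _ := by rw [Fintype.piFinset_univ]

lemma exists_perm {k : ℕ} (r s : Fin k → ι) (h : ∀ i, cnt s i = cnt r i) :
    ∃ σ : Equiv.Perm (Fin k), ∀ j, s j = r (σ j) := by
  have e : ∀ i, {j // s j = i} ≃ {j // r j = i} := fun i =>
    Fintype.equivOfCardEq (by rw [Fintype.card_subtype, Fintype.card_subtype]; exact h i)
  exact ⟨Equiv.ofFiberEquiv e, fun j => (Equiv.ofFiberEquiv_map e j).symm⟩

lemma moment_bound (c : ι → ℂ) (k : ℕ) :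
    (∫ θ : ι → UB, ‖∑ i, c i * eu (θ i)‖ ^ (2 * k))
      ≤ (k.factorial : ℝ) * (∑ i, ‖c i‖ ^ 2) ^ k := by
  classical
  haveI : IsProbabilityMeasure (volume : Measure (ι → UB)) := by
    rw [show (volume : Measure (ι → UB)) = Measure.pi fun _ => (volume : Measure UB) from rfl]
    infer_instance
  set P : (ι → UB) → ℂ := fun θ => ∑ i, c i * eu (θ i) with hPdef
  have hPmeas : Measurable P :=
    Finset.measurable_sum _ fun i _ =>
      measurable_const.mul (measurable_eu.comp (measurable_pi_apply i))
  have hPnorm : ∀ θ, ‖P θ‖ ≤ ∑ i, ‖c i‖ := by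
    intro θ
    refine (norm_sum_le _ _).trans (Finset.sum_le_sum fun i _ => ?_)
    rw [norm_mul, eu_norm (θ i), mul_one]
  have hPint : Integrable (fun θ : ι → UB => P θ ^ k * (starRingEnd ℂ) (P θ) ^ k) := by
    refine (integrable_const ((∑ i, ‖c i‖) ^ (2 * k))).mono' ?_ ?_
    · exact ((hPmeas.pow_const k).mul
        (((RCLike.continuous_conj.measurable).comp hPmeas).pow_const k)).aestronglyMeasurable
    · refine Filter.Eventually.of_forall fun θ => ?_
      rw [norm_mul, norm_pow, norm_pow, RCLike.norm_conj, ← pow_add, two_mul]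
      exact pow_le_pow_left₀ (norm_nonneg _) (hPnorm θ) (k + k)
  -- Step 1: complexified integrand
  have hsplit : ∀ θ, ((‖P θ‖ ^ (2 * k) : ℝ) : ℂ) = P θ ^ k * (starRingEnd ℂ) (P θ) ^ k := by
    intro θ
    rw [← mul_pow, Complex.mul_conj, ← Complex.ofReal_pow]
    congr 1
    rw [pow_mul, Complex.sq_norm]
  have hint1 : (∫ θ : ι → UB, ‖P θ‖ ^ (2 * k))
      = (∫ θ : ι → UB, P θ ^ k * (starRingEnd ℂ) (P θ) ^ k).re := by
    have hre := integral_re (μ := (volume : Measure (ι → UB))) hPint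
    simp only [RCLike.re_to_complex] at hre
    rw [← hre]
    refine integral_congr_ae (Filter.Eventually.of_forall fun θ => ?_)
    show ‖P θ‖ ^ (2 * k) = (P θ ^ k * (starRingEnd ℂ) (P θ) ^ k).re
    rw [← hsplit θ, Complex.ofReal_re]
  -- Step 2: expansion
  have hPk : ∀ θ : ι → UB, P θ ^ k = ∑ r : Fin k → ι, ∏ j, (c (r j) * eu (θ (r j))) :=
    fun θ => sum_pow_expand (fun i => c i * eu (θ i)) k
  have hPkc : ∀ θ : ι → UB, (starRingEnd ℂ) (P θ) ^ k
      = ∑ s : Fin k → ι, ∏ j, ((starRingEnd ℂ) (c (s j)) * (starRingEnd ℂ) (eu (θ (s j)))) := by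
    intro θ
    have h : (starRingEnd ℂ) (P θ) = ∑ i, (starRingEnd ℂ) (c i) * (starRingEnd ℂ) (eu (θ i)) := by
      rw [hPdef]; simp [map_sum]
    rw [h, sum_pow_expand (fun i => (starRingEnd ℂ) (c i) * (starRingEnd ℂ) (eu (θ i))) k]
  -- Step 3: per-term integral
  have hterm : ∀ r s : Fin k → ι,
      (∫ θ : ι → UB, (∏ j, (c (r j) * eu (θ (r j)))) *
        ∏ j, ((starRingEnd ℂ) (c (s j)) * (starRingEnd ℂ) (eu (θ (s j)))))
      = ((∏ j, c (r j)) * ∏ j, (starRingEnd ℂ) (c (s j))) *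
          (if ∀ i, cnt r i = cnt s i then 1 else 0) := by
    intro r s
    have hpt : ∀ θ : ι → UB,
        (∏ j, (c (r j) * eu (θ (r j)))) *
          ∏ j, ((starRingEnd ℂ) (c (s j)) * (starRingEnd ℂ) (eu (θ (s j))))
        = ((∏ j, c (r j)) * ∏ j, (starRingEnd ℂ) (c (s j))) *
            ∏ i, (eu (θ i) ^ cnt r i * (starRingEnd ℂ) (eu (θ i)) ^ cnt s i) := by
      intro θ
      rw [Finset.prod_mul_distrib, Finset.prod_mul_distrib,
        prod_comp_eq_prod_pow r (fun i => eu (θ i)),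
        prod_comp_eq_prod_pow s (fun i => (starRingEnd ℂ) (eu (θ i))),
        mul_mul_mul_comm]
      exact congrArg _ Finset.prod_mul_distrib.symm
    simp_rw [hpt]
    rw [integral_const_mul]
    congr 1
    refine (integral_fintype_prod_eq_prod (ι := ι) (μ := fun _ => (volume : Measure UB))
      (f := fun i (t : UB) => eu t ^ cnt r i * (starRingEnd ℂ) (eu t) ^ cnt s i)).trans ?_
    by_cases h : ∀ i, cnt r i = cnt s i
    · rw [if_pos h]
      refine Finset.prod_eq_one fun i _ => ?_
      rw [eu_orth, if_pos (h i)]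
    · rw [if_neg h]
      push_neg at h
      obtain ⟨i, hi⟩ := h
      refine Finset.prod_eq_zero (Finset.mem_univ i) ?_
      rw [eu_orth, if_neg hi]
  -- Step 4: integrability of each term
  have hTint : ∀ r s : Fin k → ι, Integrable (fun θ : ι → UB =>
      (∏ j, (c (r j) * eu (θ (r j)))) *
        ∏ j, ((starRingEnd ℂ) (c (s j)) * (starRingEnd ℂ) (eu (θ (s j))))) := by
    intro r s
    refine (integrable_const ((∏ j, ‖c (r j)‖) * ∏ j, ‖c (s j)‖)).mono' ?_ ?_
    · refine (Measurable.mul ?_ ?_).aestronglyMeasurable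
      · exact Finset.measurable_prod _ fun j _ =>
          measurable_const.mul (measurable_eu.comp (measurable_pi_apply (r j)))
      · exact Finset.measurable_prod _ fun j _ =>
          measurable_const.mul
            ((RCLike.continuous_conj.measurable).comp
              (measurable_eu.comp (measurable_pi_apply (s j))))
    · refine Filter.Eventually.of_forall fun θ => ?_
      rw [norm_mul, norm_prod, norm_prod]
      apply le_of_eq
      congr 1
      · exact Finset.prod_congr rfl fun j _ => by
          rw [norm_mul, eu_norm (θ (r j)), mul_one]
      · exact Finset.prod_congr rfl fun j _ => by
          rw [norm_mul, RCLike.norm_conj, RCLike.norm_conj, eu_norm (θ (s j)), mul_one]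
  -- Step 5: expand the integral
  have hexpand : (∫ θ : ι → UB, P θ ^ k * (starRingEnd ℂ) (P θ) ^ k)
      = ∑ r : Fin k → ι, ∑ s : Fin k → ι,
          ((∏ j, c (r j)) * ∏ j, (starRingEnd ℂ) (c (s j))) *
            (if ∀ i, cnt r i = cnt s i then 1 else 0) := by
    have hpt : ∀ θ : ι → UB, P θ ^ k * (starRingEnd ℂ) (P θ) ^ k
        = ∑ r : Fin k → ι, ∑ s : Fin k → ι,
            (∏ j, (c (r j) * eu (θ (r j)))) *
              ∏ j, ((starRingEnd ℂ) (c (s j)) * (starRingEnd ℂ) (eu (θ (s j)))) := by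
      intro θ
      rw [hPk θ, hPkc θ, Finset.sum_mul_sum]
    simp_rw [hpt]
    rw [integral_finset_sum _ fun r _ => integrable_finset_sum _ fun s _ => hTint r s]
    refine Finset.sum_congr rfl fun r _ => ?_
    rw [integral_finset_sum _ fun s _ => hTint r s]
    exact Finset.sum_congr rfl fun s _ => hterm r s
  -- Step 6: evaluate the double sum
  have hinner : ∀ r : Fin k → ι,
      (∑ s : Fin k → ι, ((∏ j, c (r j)) * ∏ j, (starRingEnd ℂ) (c (s j))) *
          (if ∀ i, cnt r i = cnt s i then 1 else 0))
      = ((((Finset.univ.filter fun s : Fin k → ι => ∀ i, cnt r i = cnt s i).card : ℝ)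
          * ∏ j, ‖c (r j)‖ ^ 2 : ℝ) : ℂ) := by
    intro r
    have h1 : ∀ s : Fin k → ι,
        ((∏ j, c (r j)) * ∏ j, (starRingEnd ℂ) (c (s j))) *
          (if ∀ i, cnt r i = cnt s i then 1 else 0)
        = if ∀ i, cnt r i = cnt s i
            then ((∏ j, c (r j)) * ∏ j, (starRingEnd ℂ) (c (s j))) else 0 := by
      intro s
      by_cases h : ∀ i, cnt r i = cnt s i <;> simp [h]
    rw [Finset.sum_congr rfl fun s _ => h1 s, ← Finset.sum_filter]
    have h2 : ∀ s ∈ Finset.univ.filter fun s : Fin k → ι => ∀ i, cnt r i = cnt s i,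
        ((∏ j, c (r j)) * ∏ j, (starRingEnd ℂ) (c (s j)))
        = (((∏ j, ‖c (r j)‖ ^ 2 : ℝ)) : ℂ) := by
      intro s hs
      have hcnt := (Finset.mem_filter.mp hs).2
      have h3 : ∏ j, (starRingEnd ℂ) (c (s j)) = (starRingEnd ℂ) (∏ j, c (r j)) := by
        rw [map_prod, prod_comp_eq_prod_pow s (fun i => (starRingEnd ℂ) (c i)),
          prod_comp_eq_prod_pow r (fun i => (starRingEnd ℂ) (c i))]
        exact Finset.prod_congr rfl fun i _ => by rw [hcnt i]
      rw [h3, Complex.mul_conj]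
      congr 1
      rw [Complex.normSq_eq_norm_sq, norm_prod, ← Finset.prod_pow]
    rw [Finset.sum_congr rfl h2, Finset.sum_const, nsmul_eq_mul]
    push_cast
    ring
  -- Step 7: the cardinality bound
  have hcard : ∀ r : Fin k → ι,
      (Finset.univ.filter fun s : Fin k → ι => ∀ i, cnt r i = cnt s i).card ≤ k.factorial := by
    intro r
    have key : ∀ s ∈ (Finset.univ.filter fun s : Fin k → ι => ∀ i, cnt r i = cnt s i),
        ∃ σ : Equiv.Perm (Fin k), ∀ j, s j = r (σ j) := fun s hs =>
      exists_perm r s fun i => ((Finset.mem_filter.mp hs).2 i).symm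
    have hle : (Finset.univ.filter fun s : Fin k → ι => ∀ i, cnt r i = cnt s i).card
        ≤ (Finset.univ : Finset (Equiv.Perm (Fin k))).card := by
      refine Finset.card_le_card_of_injOn
        (fun s => if h : ∃ σ : Equiv.Perm (Fin k), ∀ j, s j = r (σ j) then h.choose else 1)
        (fun s _ => Finset.mem_univ _) ?_
      intro s1 h1 s2 h2 h12
      have H1 := key s1 h1
      have H2 := key s2 h2
      dsimp only at h12
      rw [dif_pos H1, dif_pos H2] at h12
      funext j
      rw [H1.choose_spec j, H2.choose_spec j, h12]
    simpa [Finset.card_univ, Fintype.card_perm, Fintype.card_fin] using hle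
  -- Conclusion
  rw [hint1, hexpand, Finset.sum_congr rfl fun r _ => hinner r]
  rw [← Complex.ofReal_sum, Complex.ofReal_re]
  calc ∑ r : Fin k → ι,
        (((Finset.univ.filter fun s : Fin k → ι => ∀ i, cnt r i = cnt s i).card : ℝ)
          * ∏ j, ‖c (r j)‖ ^ 2)
      ≤ ∑ r : Fin k → ι, (k.factorial : ℝ) * ∏ j, ‖c (r j)‖ ^ 2 := by
        refine Finset.sum_le_sum fun r _ => ?_
        refine mul_le_mul_of_nonneg_right ?_ (Finset.prod_nonneg fun j _ => sq_nonneg _)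
        exact_mod_cast hcard r
    _ = (k.factorial : ℝ) * (∑ i, ‖c i‖ ^ 2) ^ k := by
        rw [← Finset.mul_sum, sum_pow_expand (fun i => ‖c i‖ ^ 2) k]

end Statement11Aux

open Statement11Aux

theorem statement11
    (N : ℕ) (hN : 1 ≤ N)
    (m : Fin N → ℕ) [∀ j, NeZero (m j)]
    (χ : ∀ j, DirichletCharacter ℂ (m j))
    (hprim : ∀ j, (χ j).IsPrimitive)
    (hnonpr : ∀ j, χ j ≠ 1)
    (hdist : ∀ i j : Fin N, i ≠ j →
      (fun k : ℕ => χ i (k : ZMod (m i))) ≠ (fun k : ℕ => χ j (k : ZMod (m j))))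
    (a : Fin N → ℝ) (ha : ∀ j, a j ≠ 0) :
    ∃ D : ℝ, 0 < D ∧ ∀ k : ℕ, ∃ T₀ : ℝ, ∀ T : ℝ, T₀ ≤ T →
      ∀ X : ℝ, 2 ≤ X → X ≤ T ^ ((1 : ℝ) / (2 * k)) →
        (∫ θ, |(PLtheta N m χ a (X ^ 2) θ).re| ^ k ∂(thetaMeasure (X ^ 2))) ≤
          (D * k * PsiFn (X ^ 2)) ^ ((k : ℝ) / 2) := by
  classical
  set A : ℝ := ∑ j, |a j| with hA
  have hApos : 0 < A :=
    Finset.sum_pos (fun j _ => abs_pos.mpr (ha j)) ⟨⟨0, hN⟩, Finset.mem_univ _⟩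
  refine ⟨A ^ 2, by positivity, fun k => ⟨0, fun T _ X hX _ => ?_⟩⟩
  set Y : ℝ := X ^ 2 with hY
  set ι := {p // p ∈ primesUpTo Y}
  haveI : IsProbabilityMeasure (thetaMeasure Y) := by
    show IsProbabilityMeasure (Measure.pi fun _ : ι => volume.restrict (Set.Icc 0 1))
    haveI : IsProbabilityMeasure ((volume : Measure ℝ).restrict (Set.Icc 0 1)) :=
      ⟨by simp [Real.volume_Icc]⟩
    infer_instance
  set c : ι → ℂ := fun p =>
    (∑ j, (a j : ℂ) * χ j ((p : ℕ) : ZMod (m j))) / (Real.sqrt (p : ℕ) : ℂ) with hc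
  have hP : ∀ θ : ι → ℝ, PLtheta N m χ a Y θ = ∑ p : ι, c p * eu (θ p) := by
    intro θ
    refine Finset.sum_congr rfl fun p _ => ?_
    rw [hc, eu, mul_div_right_comm]
  -- basic facts about primes in the range
  have hprime : ∀ p : ι, Nat.Prime (p : ℕ) := fun p => (Finset.mem_filter.mp p.2).2
  -- bound on the coefficients
  have hc2 : ∀ p : ι, ‖c p‖ ^ 2 ≤ A ^ 2 * (1 / ((p : ℕ) : ℝ)) := by
    intro p
    have hppos : (0 : ℝ) < ((p : ℕ) : ℝ) := by exact_mod_cast (hprime p).pos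
    have hb : ‖∑ j, (a j : ℂ) * χ j ((p : ℕ) : ZMod (m j))‖ ≤ A := by
      refine (norm_sum_le _ _).trans ?_
      refine Finset.sum_le_sum fun j _ => ?_
      rw [norm_mul, Complex.norm_real]
      calc ‖a j‖ * ‖χ j ((p : ℕ) : ZMod (m j))‖ ≤ ‖a j‖ * 1 :=
            mul_le_mul_of_nonneg_left (DirichletCharacter.norm_le_one _ _) (norm_nonneg _)
        _ = |a j| := by rw [mul_one, Real.norm_eq_abs]
    rw [hc, norm_div, Complex.norm_real, Real.norm_eq_abs,
      _root_.abs_of_nonneg (Real.sqrt_nonneg _), div_pow, Real.sq_sqrt hppos.le, mul_one_div]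
    gcongr
  have hsum : ∑ p : ι, ‖c p‖ ^ 2 ≤ A ^ 2 * PsiFn Y := by
    calc ∑ p : ι, ‖c p‖ ^ 2 ≤ ∑ p : ι, A ^ 2 * (1 / ((p : ℕ) : ℝ)) :=
          Finset.sum_le_sum fun p _ => hc2 p
      _ = A ^ 2 * ∑ p : ι, (1 / ((p : ℕ) : ℝ)) := by rw [Finset.mul_sum]
      _ = A ^ 2 * PsiFn Y := by
          rw [PsiFn, Finset.sum_coe_sort (primesUpTo Y) (fun p => (1 : ℝ) / (p : ℝ))]
  -- Ψ ≥ 1/2 > 0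
  have hΨhalf : (1 / 2 : ℝ) ≤ PsiFn Y := by
    have h2mem : 2 ∈ primesUpTo Y := by
      rw [primesUpTo, Finset.mem_filter, Finset.mem_range]
      refine ⟨?_, Nat.prime_two⟩
      have h4 : (2 : ℝ) ≤ Y := by rw [hY]; nlinarith
      have h2 : (2 : ℕ) ≤ ⌊Y⌋₊ := Nat.le_floor (by exact_mod_cast h4)
      omega
    have := Finset.single_le_sum (f := fun p : ℕ => (1 : ℝ) / p)
      (fun p _ => by positivity) h2mem
    simpa [PsiFn] using this
  have hΨpos : (0 : ℝ) < PsiFn Y := lt_of_lt_of_le (by norm_num) hΨhalf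
  -- the moment bound transported to `thetaMeasure`
  set B : ℝ := (k.factorial : ℝ) * (A ^ 2 * PsiFn Y) ^ k with hB
  have hBpos : 0 < B := by
    refine mul_pos ?_ (pow_pos (by positivity) k)
    exact_mod_cast k.factorial_pos
  have hPmeas : Measurable fun θ : ι → ℝ => PLtheta N m χ a Y θ := by
    have h : Measurable fun θ : ι → ℝ => ∑ p : ι, c p * eu (θ p) := by
      refine Finset.measurable_sum _ fun p _ => ?_
      exact measurable_const.mul (measurable_eu.comp (measurable_pi_apply p))
    have heq : (fun θ : ι → ℝ => PLtheta N m χ a Y θ) = fun θ => ∑ p : ι, c p * eu (θ p) :=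
      funext hP
    rw [heq]
    exact h
  have hnormP : ∀ θ : ι → ℝ, ‖PLtheta N m χ a Y θ‖ ≤ ∑ p : ι, ‖c p‖ := by
    intro θ
    rw [hP θ]
    refine (norm_sum_le _ _).trans (Finset.sum_le_sum fun p _ => ?_)
    rw [norm_mul, eu_norm, mul_one]
  have habs_re : ∀ θ : ι → ℝ, |(PLtheta N m χ a Y θ).re| ≤ ∑ p : ι, ‖c p‖ := by
    intro θ
    calc |(PLtheta N m χ a Y θ).re| ≤ ‖PLtheta N m χ a Y θ‖ :=
          Complex.abs_re_le_norm _
      _ = ‖PLtheta N m χ a Y θ‖ := rfl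
      _ ≤ ∑ p : ι, ‖c p‖ := hnormP θ
  have hint1 : Integrable (fun θ => |(PLtheta N m χ a Y θ).re| ^ k) (thetaMeasure Y) := by
    refine (integrable_const ((∑ p : ι, ‖c p‖) ^ k)).mono' ?_ ?_
    · exact ((Complex.measurable_re.comp hPmeas).abs.pow_const k).aestronglyMeasurable
    · refine Filter.Eventually.of_forall fun θ => ?_
      rw [Real.norm_eq_abs, _root_.abs_of_nonneg (by positivity)]
      exact pow_le_pow_left₀ (abs_nonneg _) (habs_re θ) k
  have hint2 : Integrable (fun θ => ‖PLtheta N m χ a Y θ‖ ^ (2 * k)) (thetaMeasure Y) := by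
    refine (integrable_const ((∑ p : ι, ‖c p‖) ^ (2 * k))).mono' ?_ ?_
    · exact (hPmeas.norm.pow_const (2 * k)).aestronglyMeasurable
    · refine Filter.Eventually.of_forall fun θ => ?_
      rw [Real.norm_eq_abs, _root_.abs_of_nonneg (by positivity)]
      exact pow_le_pow_left₀ (norm_nonneg _) (hnormP θ) (2 * k)
  have hmom : (∫ θ, ‖PLtheta N m χ a Y θ‖ ^ (2 * k) ∂(thetaMeasure Y)) ≤ B := by
    have he : (∫ θ, ‖PLtheta N m χ a Y θ‖ ^ (2 * k) ∂(thetaMeasure Y))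
        = ∫ θ : ι → UB, ‖∑ p : ι, c p * eu (θ p)‖ ^ (2 * k) := by
      have h : (∫ θ : ι → UB, ‖PLtheta N m χ a Y θ‖ ^ (2 * k))
          = ∫ θ : ι → UB, ‖∑ p : ι, c p * eu (θ p)‖ ^ (2 * k) := by
        refine integral_congr_ae (Filter.Eventually.of_forall fun θ => ?_)
        show ‖PLtheta N m χ a Y θ‖ ^ (2 * k) = ‖∑ p : ι, c p * eu (θ p)‖ ^ (2 * k)
        rw [hP θ]
      exact h
    calc (∫ θ, ‖PLtheta N m χ a Y θ‖ ^ (2 * k) ∂(thetaMeasure Y))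
        = ∫ θ : ι → UB, ‖∑ p : ι, c p * eu (θ p)‖ ^ (2 * k) := he
      _ ≤ (k.factorial : ℝ) * (∑ p : ι, ‖c p‖ ^ 2) ^ k := moment_bound c k
      _ ≤ B := by
          rw [hB]
          refine mul_le_mul_of_nonneg_left ?_ (by positivity)
          exact pow_le_pow_left₀ (Finset.sum_nonneg fun p _ => sq_nonneg _) hsum k
  have hpoint : ∀ θ : ι → ℝ, |(PLtheta N m χ a Y θ).re| ^ k
      ≤ (‖PLtheta N m χ a Y θ‖ ^ (2 * k) + B) / (2 * Real.sqrt B) := by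
    intro θ
    set u := |(PLtheta N m χ a Y θ).re| ^ k with hu
    have hu0 : 0 ≤ u := by rw [hu]; positivity
    have h1 : u ^ 2 ≤ ‖PLtheta N m χ a Y θ‖ ^ (2 * k) := by
      have h2 : u ^ 2 = (|(PLtheta N m χ a Y θ).re| ^ 2) ^ k := by
        rw [hu, ← pow_mul, ← pow_mul, mul_comm]
      rw [h2, pow_mul]
      refine pow_le_pow_left₀ (sq_nonneg _) ?_ k
      refine pow_le_pow_left₀ (abs_nonneg _) ?_ 2
      calc |(PLtheta N m χ a Y θ).re| ≤ ‖PLtheta N m χ a Y θ‖ :=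
            Complex.abs_re_le_norm _
        _ = ‖PLtheta N m χ a Y θ‖ := rfl
    have hsB : 0 < Real.sqrt B := Real.sqrt_pos.mpr hBpos
    rw [le_div_iff₀ (by positivity)]
    nlinarith [sq_nonneg (u - Real.sqrt B), Real.sq_sqrt hBpos.le]
  have hfinal : Real.sqrt B ≤ (A ^ 2 * (k : ℝ) * PsiFn Y) ^ ((k : ℝ) / 2) := by
    have hkfact : (k.factorial : ℝ) ≤ (k : ℝ) ^ k := by exact_mod_cast Nat.factorial_le_pow k
    have hbase : (0 : ℝ) ≤ (k : ℝ) * (A ^ 2 * PsiFn Y) :=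
      mul_nonneg (Nat.cast_nonneg k) (by positivity)
    have h1 : B ≤ ((k : ℝ) * (A ^ 2 * PsiFn Y)) ^ k := by
      rw [mul_pow, hB]
      exact mul_le_mul_of_nonneg_right hkfact (pow_nonneg (by positivity) k)
    calc Real.sqrt B ≤ Real.sqrt (((k : ℝ) * (A ^ 2 * PsiFn Y)) ^ k) := Real.sqrt_le_sqrt h1
      _ = (((k : ℝ) * (A ^ 2 * PsiFn Y)) ^ k) ^ ((1 : ℝ) / 2) := Real.sqrt_eq_rpow _
      _ = ((k : ℝ) * (A ^ 2 * PsiFn Y)) ^ ((k : ℝ) / 2) := by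
          rw [← Real.rpow_natCast ((k : ℝ) * (A ^ 2 * PsiFn Y)) k, ← Real.rpow_mul hbase]
          congr 1
          ring
      _ = (A ^ 2 * (k : ℝ) * PsiFn Y) ^ ((k : ℝ) / 2) := by
          rw [show (k : ℝ) * (A ^ 2 * PsiFn Y) = A ^ 2 * (k : ℝ) * PsiFn Y by ring]
  calc (∫ θ, |(PLtheta N m χ a Y θ).re| ^ k ∂(thetaMeasure Y))
      ≤ ∫ θ, (‖PLtheta N m χ a Y θ‖ ^ (2 * k) + B) / (2 * Real.sqrt B) ∂(thetaMeasure Y) := by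
        refine integral_mono hint1 ?_ hpoint
        exact (hint2.add (integrable_const B)).div_const _
    _ = ((∫ θ, ‖PLtheta N m χ a Y θ‖ ^ (2 * k) ∂(thetaMeasure Y)) + B) / (2 * Real.sqrt B) := by
        rw [integral_div, integral_add hint2 (integrable_const B), integral_const, probReal_univ,
          one_smul]
    _ ≤ (B + B) / (2 * Real.sqrt B) := by
        have hsB : 0 < 2 * Real.sqrt B := by
          have := Real.sqrt_pos.mpr hBpos
          positivity
        gcongr
    _ = Real.sqrt B := by
        rw [show B + B = 2 * B by ring, mul_div_mul_left _ _ (two_ne_zero), Real.div_sqrt]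
    _ ≤ (A ^ 2 * (k : ℝ) * PsiFn Y) ^ ((k : ℝ) / 2) := hfinal
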